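/- arXiv:0907.1826 — 3 statements merged into one kernel-verified Lean document; each statement's English description precedes it below -/
import Mathlib

section
/- Let M = 3K be divisible by 3. The cyclic system u_k = ξ_{k-1} + ξ_k + ξ_{k+1} (indices mod M) has a solution ξ if and only if Σ_{j=0}^{K-1} u_{1+3j} = Σ_{j=0}^{K-1} u_{2+3j} = Σ_{j=0}^{K-1} u_{3+3j}. -/
/-!
Summing `u k = ξ (k - 1) + ξ k + ξ (k + 1)` over one residue class mod 3 counts every value of `ξ`
exactly once, so all three class sums equal `∑ ξ`.

Conversely, solve `v (n + 1) = x n + x (n + 1) + x (n + 2)` on `ℕ` with `x 0 = x 1 = 0`, where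
`v n = u n`. Then `x (n + 3) - x n = v (n + 2) - v (n + 1)`, so `x M` and `x (M + 1)` are
differences of consecutive class sums and vanish. As `x (n + M) - x n` solves the homogeneous
recurrence with zero initial values, `x` is `M`-periodic and descends to `ZMod M`.
-/

open Finset Function

section AddCommMonoid

variable {G : Type*} [AddCommMonoid G]

theorem ZMod.sum_range_natCast (n : ℕ) [NeZero n] (f : ZMod n → G) :
    ∑ i ∈ range n, f i = ∑ k, f k := by
  refine sum_nbij' (↑) ZMod.val (fun _ _ ↦ mem_univ _)
    (fun k _ ↦ mem_range.mpr k.val_lt) (fun i hi ↦ ?_) (fun k _ ↦ ZMod.natCast_zmod_val k)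
    (fun _ _ ↦ rfl)
  rw [ZMod.val_natCast, Nat.mod_eq_of_lt (mem_range.mp hi)]

theorem Finset.sum_range_three_mul (f : ℕ → G) (K : ℕ) :
    ∑ n ∈ range (3 * K), f n = ∑ j ∈ range K, (f (3 * j) + f (3 * j + 1) + f (3 * j + 2)) := by
  induction K with
  | zero => simp
  | succ K ih =>
    rw [show 3 * (K + 1) = 3 * K + 2 + 1 by ring, sum_range_succ, sum_range_succ,
      sum_range_succ, ih, sum_range_succ, add_assoc, add_assoc, add_assoc]

theorem ZMod.sum_residueClass_eq_sum_of_three_term {M K : ℕ} [NeZero M] (hM : M = 3 * K)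
    {u ξ : ZMod M → G} (h : ∀ k, u k = ξ (k - 1) + ξ k + ξ (k + 1)) (c : ℕ) :
    ∑ j ∈ range K, u ((c + 1 + 3 * j : ℕ) : ZMod M) = ∑ k, ξ k := by
  calc ∑ j ∈ range K, u ((c + 1 + 3 * j : ℕ) : ZMod M)
      = ∑ j ∈ range K,
          (ξ (c + (3 * j : ℕ)) + ξ (c + (3 * j + 1 : ℕ)) + ξ (c + (3 * j + 2 : ℕ))) := by
        refine sum_congr rfl fun j _ ↦ ?_
        rw [h]
        push_cast
        ring_nf
    _ = ∑ n ∈ range M, ξ (c + n) := by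
        rw [show range M = range (3 * K) by rw [hM], sum_range_three_mul (fun n ↦ ξ (c + n))]
    _ = ∑ k, ξ (c + k) := ZMod.sum_range_natCast M (fun k ↦ ξ (c + k))
    _ = ∑ k, ξ k := Equiv.sum_comp (Equiv.addLeft (c : ZMod M)) ξ

end AddCommMonoid

section AddCommGroup

variable {G : Type*} [AddCommGroup G]

def threeTermSolution (v : ℕ → G) : ℕ → G
  | 0 => 0
  | 1 => 0
  | n + 2 => v (n + 1) - threeTermSolution v (n + 1) - threeTermSolution v n

theorem threeTermSolution_spec (v : ℕ → G) (n : ℕ) :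
    v (n + 1) =
      threeTermSolution v n + threeTermSolution v (n + 1) + threeTermSolution v (n + 2) := by
  rw [threeTermSolution]
  abel

theorem threeTermSolution_add_three (v : ℕ → G) (n : ℕ) :
    threeTermSolution v (n + 3) = threeTermSolution v n + (v (n + 2) - v (n + 1)) := by
  simp only [threeTermSolution]
  abel

theorem threeTermSolution_add_three_mul (v : ℕ → G) (n t : ℕ) :
    threeTermSolution v (n + 3 * t) =
      threeTermSolution v n + ∑ j ∈ range t, (v (n + 2 + 3 * j) - v (n + 1 + 3 * j)) := by
  induction t with
  | zero => simp
  | succ t ih =>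
    rw [show n + 3 * (t + 1) = n + 3 * t + 3 by ring, threeTermSolution_add_three, ih,
      sum_range_succ, add_assoc, add_right_comm n (3 * t) 2, add_right_comm n (3 * t) 1]

theorem Function.Periodic.of_three_term {x v : ℕ → G} {M : ℕ} (hv : Periodic v M)
    (hx : ∀ n, v (n + 1) = x n + x (n + 1) + x (n + 2)) (h₀ : x M = x 0) (h₁ : x (M + 1) = x 1) :
    Periodic x M := by
  intro n
  induction n using Nat.twoStepInduction with
  | zero => rw [zero_add, h₀]
  | one => rw [add_comm, h₁]
  | more n ih₀ ih₁ =>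
    have h := hx (n + M)
    rw [add_right_comm, hv, add_right_comm, ih₁, ih₀, add_right_comm, hx n] at h
    rw [add_right_comm]
    exact (add_left_cancel h).symm

theorem ZMod.exists_three_term_of_periodic {M : ℕ} [NeZero M] {u : ZMod M → G} {x : ℕ → G}
    (hx : Periodic x M) (h : ∀ n : ℕ, u (n + 1 : ℕ) = x n + x (n + 1) + x (n + 2)) :
    ∃ ξ : ZMod M → G, ∀ k, u k = ξ (k - 1) + ξ k + ξ (k + 1) := by
  have hξ (n : ℕ) : x (n : ZMod M).val = x n := by rw [ZMod.val_natCast, hx.map_mod_nat]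
  refine ⟨fun k ↦ x k.val, fun k ↦ ?_⟩
  obtain ⟨n, rfl⟩ : ∃ n : ℕ, (n + 1 : ℕ) = k := ⟨(k - 1).val, by simp⟩
  have e₀ : ((n + 1 : ℕ) : ZMod M) - 1 = n := by push_cast; ring
  have e₂ : ((n + 1 : ℕ) : ZMod M) + 1 = (n + 2 : ℕ) := by push_cast; ring
  simp only [e₀, e₂, hξ]
  exact h n

end AddCommGroup

/-- For `M = 3K`, the cyclic system `u k = ξ (k-1) + ξ k + ξ (k+1)` has a solution iff the
three sums of `u` over the residue classes `1, 2, 3 (mod 3)` coincide. -/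
theorem sym_div3_solvable_iff (M K : ℕ) (hK : 0 < K) (hM : M = 3 * K)
    (u : ZMod M → ℝ) :
    (∃ ξ : ZMod M → ℝ, ∀ k : ZMod M, u k = ξ (k - 1) + ξ k + ξ (k + 1)) ↔
      (∑ j ∈ Finset.range K, u ((1 + 3 * j : ℕ) : ZMod M) =
          ∑ j ∈ Finset.range K, u ((2 + 3 * j : ℕ) : ZMod M) ∧
        ∑ j ∈ Finset.range K, u ((2 + 3 * j : ℕ) : ZMod M) =
          ∑ j ∈ Finset.range K, u ((3 + 3 * j : ℕ) : ZMod M)) := by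
  have : NeZero M := ⟨by omega⟩
  constructor
  · rintro ⟨ξ, hξ⟩
    have hS := ZMod.sum_residueClass_eq_sum_of_three_term hM hξ
    exact ⟨(hS 0).trans (hS 1).symm, (hS 1).trans (hS 2).symm⟩
  · rintro ⟨h₁₂, h₂₃⟩
    let v : ℕ → ℝ := fun n ↦ u n
    have hv : Periodic v M := fun n ↦ by simp [v]
    have hx := threeTermSolution_spec v
    refine ZMod.exists_three_term_of_periodic (hv.of_three_term hx ?_ ?_) hx
    · rw [← zero_add M, hM, threeTermSolution_add_three_mul, sum_sub_distrib]
      simp only [v, zero_add, h₁₂, sub_self, add_zero]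
    · rw [add_comm, hM, threeTermSolution_add_three_mul, sum_sub_distrib]
      simp only [v, Nat.reduceAdd, h₂₃, sub_self, add_zero]
end

section
/- Let M = 3K be divisible by 3, and suppose u satisfies the compatibility condition Σ_{j} u_{1+3j} = Σ_j u_{2+3j} = Σ_j u_{3+3j}. Then for any real numbers a, b there is a solution ξ of the cyclic system u_k = ξ_{k-1} + ξ_k + ξ_{k+1} (indices mod M) with ξ_1 = a and ξ_2 = b. -/
/-!
Lift the problem to `ℕ`: the forward recursion `x (n + 2) = u (n + 1) - x n - x (n + 1)` with
`x 0 = u 1 - a - b`, `x 1 = a` solves the system on `ℕ` and has `x 2 = b`. Subtracting two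
consecutive equations gives `x (n + 3) - x n = u (n + 2) - u (n + 1)`, so `x (n + 3K) - x n` is the
difference of the sums of `u` over two residue classes mod 3, which vanishes by the compatibility
condition. Hence `x` is `M`-periodic and descends to a solution on `ZMod M`.
-/

open Finset Function

section ThreeTermSum

variable {G : Type*} [AddCommGroup G]

def threeTermSeq (v : ℕ → G) (c a : G) : ℕ → G
  | 0 => c
  | 1 => a
  | n + 2 => v (n + 1) - threeTermSeq v c a n - threeTermSeq v c a (n + 1)

theorem threeTermSeq_add_add (v : ℕ → G) (c a : G) (n : ℕ) :
    threeTermSeq v c a n + threeTermSeq v c a (n + 1) + threeTermSeq v c a (n + 2) =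
      v (n + 1) := by
  rw [threeTermSeq]
  abel

def residueClassSum (v : ℕ → G) (K r : ℕ) : G :=
  ∑ j ∈ range K, v (r + 3 * j)

variable {v x : ℕ → G} {K : ℕ}

theorem residueClassSum_periodic (hv : Periodic v (3 * K)) :
    Periodic (residueClassSum v K) 3 := by
  intro r
  calc residueClassSum v K (r + 3)
      = ∑ j ∈ range K, v (r + 3 * (j + 1)) := by
        refine sum_congr rfl fun j _ => ?_
        rw [mul_add, mul_one, add_right_comm, add_assoc]
    _ = ∑ j ∈ range (K + 1), v (r + 3 * j) - v r := by
        rw [sum_range_succ', mul_zero, add_zero, add_sub_cancel_right]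
    _ = residueClassSum v K r := by
        rw [sum_range_succ, hv r, add_sub_cancel_right, residueClassSum]

theorem residueClassSum_succ_eq (hv : Periodic v (3 * K))
    (h12 : residueClassSum v K 1 = residueClassSum v K 2)
    (h23 : residueClassSum v K 2 = residueClassSum v K 3) (n : ℕ) :
    residueClassSum v K (n + 1) = residueClassSum v K 1 := by
  have hS := residueClassSum_periodic hv
  rw [← hS.map_mod_nat]
  obtain h | h | h : (n + 1) % 3 = 0 ∨ (n + 1) % 3 = 1 ∨ (n + 1) % 3 = 2 := by omega
  · rw [h, ← hS 0, h12, h23]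
  · rw [h]
  · rw [h, h12]

theorem add_three_sub_of_add_add (hx : ∀ n, x n + x (n + 1) + x (n + 2) = v (n + 1)) (n : ℕ) :
    x (n + 3) - x n = v (n + 2) - v (n + 1) := by
  have h1 : x (n + 1) + x (n + 2) + x (n + 3) = v (n + 2) := hx (n + 1)
  calc x (n + 3) - x n
      = (x (n + 1) + x (n + 2) + x (n + 3)) - (x n + x (n + 1) + x (n + 2)) := by abel
    _ = v (n + 2) - v (n + 1) := by rw [h1, hx n]

theorem add_three_mul_sub_of_add_add (hx : ∀ n, x n + x (n + 1) + x (n + 2) = v (n + 1))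
    (n : ℕ) :
    x (n + 3 * K) - x n = residueClassSum v K (n + 2) - residueClassSum v K (n + 1) := by
  have htelescope := sum_range_sub (fun j => x (n + 3 * j)) K
  simp only [mul_zero, add_zero] at htelescope
  rw [residueClassSum, residueClassSum, ← sum_sub_distrib, ← htelescope]
  refine sum_congr rfl fun j _ => ?_
  rw [mul_add, mul_one, ← add_assoc, add_three_sub_of_add_add hx, add_right_comm n 2,
    add_right_comm n 1]

theorem periodic_of_add_add (hx : ∀ n, x n + x (n + 1) + x (n + 2) = v (n + 1))
    (hv : Periodic v (3 * K)) (h12 : residueClassSum v K 1 = residueClassSum v K 2)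
    (h23 : residueClassSum v K 2 = residueClassSum v K 3) :
    Periodic x (3 * K) := fun n => by
  rw [← sub_eq_zero, add_three_mul_sub_of_add_add hx, residueClassSum_succ_eq hv h12 h23 (n + 1),
    residueClassSum_succ_eq hv h12 h23 n, sub_self]

end ThreeTermSum

section ZMod

variable {G : Type*} {M : ℕ}

theorem Function.Periodic.apply_val_natCast {x : ℕ → G} (hx : Periodic x M) (n : ℕ) :
    x (n : ZMod M).val = x n := by
  rw [ZMod.val_natCast, hx.map_mod_nat]

theorem eq_add_add_of_periodic [AddCommGroup G] [NeZero M] {u : ZMod M → G}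
    {x : ℕ → G} (hper : Periodic x M) (hx : ∀ n : ℕ, x n + x (n + 1) + x (n + 2) = u (n + 1 : ℕ))
    (k : ZMod M) : u k = x (k - 1).val + x k.val + x (k + 1).val := by
  obtain ⟨n, rfl⟩ : ∃ n : ℕ, k = ((n + 1 : ℕ) : ZMod M) := ⟨(k - 1).val, by simp⟩
  have hprev : ((n + 1 : ℕ) : ZMod M) - 1 = (n : ZMod M) := by push_cast; ring
  have hnext : ((n + 1 : ℕ) : ZMod M) + 1 = ((n + 2 : ℕ) : ZMod M) := by push_cast; ring
  rw [hprev, hnext, hper.apply_val_natCast, hper.apply_val_natCast, hper.apply_val_natCast, hx n]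

end ZMod

/-- For `M = 3K` with the compatibility condition, for any reals `a, b` there is a solution
`ξ` of the cyclic system `u k = ξ (k-1) + ξ k + ξ (k+1)` with `ξ 1 = a` and `ξ 2 = b`. -/
theorem sym_div3_two_parameter_family (M K : ℕ) (hK : 0 < K) (hM : M = 3 * K)
    (u : ZMod M → ℝ)
    (hcond1 : ∑ j ∈ Finset.range K, u ((1 + 3 * j : ℕ) : ZMod M) =
      ∑ j ∈ Finset.range K, u ((2 + 3 * j : ℕ) : ZMod M))
    (hcond2 : ∑ j ∈ Finset.range K, u ((2 + 3 * j : ℕ) : ZMod M) =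
      ∑ j ∈ Finset.range K, u ((3 + 3 * j : ℕ) : ZMod M)) :
    ∀ a b : ℝ, ∃ ξ : ZMod M → ℝ,
      ξ 1 = a ∧ ξ 2 = b ∧ ∀ k : ZMod M, u k = ξ (k - 1) + ξ k + ξ (k + 1) := by
  intro a b
  have : NeZero M := ⟨by omega⟩
  set v : ℕ → ℝ := fun n => u n
  have hv : Periodic v (3 * K) := fun n => by simp [v, ← hM]
  set x := threeTermSeq v (v 1 - a - b) a
  have hx := threeTermSeq_add_add v (v 1 - a - b) a
  have hper : Periodic x M := hM ▸ periodic_of_add_add hx hv hcond1 hcond2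
  refine ⟨fun k => x k.val, ?_, ?_, eq_add_add_of_periodic hper hx⟩
  · simpa [x, threeTermSeq] using hper.apply_val_natCast 1
  · have h2 := hper.apply_val_natCast 2
    rw [Nat.cast_ofNat] at h2
    simp only [h2, x, threeTermSeq]
    abel
end

section
/- Let v : ℤ/M → ℕ be such that every maximal run of positive entries has length at most 2 and every maximal run of zero entries has length at most 2, and every run of two consecutive zeros is immediately preceded and followed by a single positive entry (no pattern (+,+,0,0) or (0,0,+,+)). Then any occurrence of the pattern (0,0,+,0,0) (i.e. v_{k-2}=v_{k-1}=0, v_k>0, v_{k+1}=v_{k+2}=0) extends to the pattern (0,+,0,0,+,0,0,+,0) centered at k. -/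
/-!
Only the zero pairs `v (k-2) = v (k-1) = 0` and `v (k+1) = v (k+2) = 0` matter. A zero pair
cannot be extended to a zero triple, so it is flanked by positive entries on both sides; those
flanking positives are isolated, since `(+,+,0,0)` and `(0,0,+,+)` are excluded. Each of the two
zero pairs thus sits inside a window `(0,+,0,0,+,0)`, and the two windows together give the
pattern around `k`.
-/

section ZeroPair

variable {R : Type*} [CommRing R] {v : R → ℕ}

theorem pos_sub_one_of_zero_pair
    (hzero3 : ∀ k : R, ¬ (v k = 0 ∧ v (k + 1) = 0 ∧ v (k + 2) = 0))
    {k : R} (h₀ : v k = 0) (h₁ : v (k + 1) = 0) : 0 < v (k - 1) :=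
  Nat.pos_of_ne_zero fun h ↦ hzero3 (k - 1)
    ⟨h, by rwa [sub_add_cancel], by rwa [show k - 1 + 2 = k + 1 by ring]⟩

theorem pos_add_two_of_zero_pair
    (hzero3 : ∀ k : R, ¬ (v k = 0 ∧ v (k + 1) = 0 ∧ v (k + 2) = 0))
    {k : R} (h₀ : v k = 0) (h₁ : v (k + 1) = 0) : 0 < v (k + 2) :=
  Nat.pos_of_ne_zero fun h ↦ hzero3 k ⟨h₀, h₁, h⟩

theorem zero_sub_two_of_zero_pair
    (hzero3 : ∀ k : R, ¬ (v k = 0 ∧ v (k + 1) = 0 ∧ v (k + 2) = 0))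
    (hppzz : ∀ k : R, ¬ (0 < v k ∧ 0 < v (k + 1) ∧ v (k + 2) = 0 ∧ v (k + 3) = 0))
    {k : R} (h₀ : v k = 0) (h₁ : v (k + 1) = 0) : v (k - 2) = 0 := by
  by_contra h
  refine hppzz (k - 2) ⟨Nat.pos_of_ne_zero h, ?_, ?_, ?_⟩
  · rw [show k - 2 + 1 = k - 1 by ring]
    exact pos_sub_one_of_zero_pair hzero3 h₀ h₁
  · rwa [show k - 2 + 2 = k by ring]
  · rwa [show k - 2 + 3 = k + 1 by ring]

theorem zero_add_three_of_zero_pair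
    (hzero3 : ∀ k : R, ¬ (v k = 0 ∧ v (k + 1) = 0 ∧ v (k + 2) = 0))
    (hzzpp : ∀ k : R, ¬ (v k = 0 ∧ v (k + 1) = 0 ∧ 0 < v (k + 2) ∧ 0 < v (k + 3)))
    {k : R} (h₀ : v k = 0) (h₁ : v (k + 1) = 0) : v (k + 3) = 0 :=
  Nat.eq_zero_of_not_pos fun h ↦
    hzzpp k ⟨h₀, h₁, pos_add_two_of_zero_pair hzero3 h₀ h₁, h⟩

end ZeroPair

theorem isolated_positive_extends_general (M : ℕ) (v : ZMod M → ℕ)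
    (hzero3 : ∀ k : ZMod M, ¬ (v k = 0 ∧ v (k + 1) = 0 ∧ v (k + 2) = 0))
    (hppzz : ∀ k : ZMod M, ¬ (0 < v k ∧ 0 < v (k + 1) ∧ v (k + 2) = 0 ∧ v (k + 3) = 0))
    (hzzpp : ∀ k : ZMod M, ¬ (v k = 0 ∧ v (k + 1) = 0 ∧ 0 < v (k + 2) ∧ 0 < v (k + 3))) :
    ∀ k : ZMod M,
      v (k - 2) = 0 → v (k - 1) = 0 → 0 < v k → v (k + 1) = 0 → v (k + 2) = 0 →
        v (k - 4) = 0 ∧ 0 < v (k - 3) ∧ 0 < v (k + 3) ∧ v (k + 4) = 0 := by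
  intro k hm2 hm1 _ hp1 hp2
  have hm1' : v (k - 2 + 1) = 0 := by rwa [show k - 2 + 1 = k - 1 by ring]
  have hp2' : v (k + 1 + 1) = 0 := by rwa [show k + 1 + 1 = k + 2 by ring]
  refine ⟨?_, ?_, ?_, ?_⟩
  · rw [show k - 4 = k - 2 - 2 by ring]
    exact zero_sub_two_of_zero_pair hzero3 hppzz hm2 hm1'
  · rw [show k - 3 = k - 2 - 1 by ring]
    exact pos_sub_one_of_zero_pair hzero3 hm2 hm1'
  · rw [show k + 3 = k + 1 + 2 by ring]
    exact pos_add_two_of_zero_pair hzero3 hp1 hp2'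
  · rw [show k + 4 = k + 1 + 3 by ring]
    exact zero_add_three_of_zero_pair hzero3 hzzpp hp1 hp2'

/-- Under the structural constraints (no three consecutive positives, no three consecutive
zeros, no `(+,+,0,0)` or `(0,0,+,+)` patterns), every occurrence of `(0,0,+,0,0)` extends
to the pattern `(0,+,0,0,+,0,0,+,0)` centred at `k`. -/
theorem isolated_positive_extends (M : ℕ) (hM : 9 ≤ M) (v : ZMod M → ℕ)
    (hpos3 : ∀ k : ZMod M, ¬ (0 < v k ∧ 0 < v (k + 1) ∧ 0 < v (k + 2)))
    (hzero3 : ∀ k : ZMod M, ¬ (v k = 0 ∧ v (k + 1) = 0 ∧ v (k + 2) = 0))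
    (hppzz : ∀ k : ZMod M, ¬ (0 < v k ∧ 0 < v (k + 1) ∧ v (k + 2) = 0 ∧ v (k + 3) = 0))
    (hzzpp : ∀ k : ZMod M, ¬ (v k = 0 ∧ v (k + 1) = 0 ∧ 0 < v (k + 2) ∧ 0 < v (k + 3))) :
    ∀ k : ZMod M,
      v (k - 2) = 0 → v (k - 1) = 0 → 0 < v k → v (k + 1) = 0 → v (k + 2) = 0 →
        v (k - 4) = 0 ∧ 0 < v (k - 3) ∧ 0 < v (k + 3) ∧ v (k + 4) = 0 :=
  isolated_positive_extends_general M v hzero3 hppzz hzzpp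
end
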